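/- For all integers k ≥ 2, h ≥ 1, and n ≥ 1, the following identity of polynomials in ℤ[q] holds: Q_{k,h,n}(q) = Q_{k−1,h−1,n−1}(q) + Σ_{a+b=n−2, a,b ≥ 0} P_{k−1,a}(q) · Q_{k,h,b}(q). -/

import Mathlib

open Finset

attribute [local instance] Classical.propDecidable

/-- The height of the lattice path `p` (where `true` is a northeast step `(1,1)` and
`false` is a southeast step `(1,-1)`) after its first `i` steps. -/
def pathHeight {n : ℕ} (p : Fin n → Bool) (i : ℕ) : ℤ :=
  ∑ j ∈ Finset.univ.filter (fun j : Fin n => (j : ℕ) < i), (if p j then (1 : ℤ) else -1)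

/-- `p` is a generalized Dyck path from `(0,0)` to `(n,h)`: it ends at height `h`
and never goes below the x-axis. -/
def IsGDPath {n : ℕ} (h : ℤ) (p : Fin n → Bool) : Prop :=
  pathHeight p n = h ∧ ∀ i ≤ n, 0 ≤ pathHeight p i

/-- The set of generalized Dyck paths from `(0,0)` to `(n,h)`. -/
noncomputable def gdPaths (n : ℕ) (h : ℤ) : Finset (Fin n → Bool) :=
  Finset.univ.filter (IsGDPath h)

/-- The number of `k`-down steps of `p`, i.e. southeast steps from height `k` to `k-1`. -/
noncomputable def downSteps {n : ℕ} (k : ℤ) (p : Fin n → Bool) : ℕ :=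
  (Finset.univ.filter (fun i : Fin n => p i = false ∧ pathHeight p (i : ℕ) = k)).card

/-- Binomial coefficient on integers, `0` unless `0 ≤ b ≤ a`. -/
def binom (a b : ℤ) : ℤ :=
  if 0 ≤ b ∧ b ≤ a then (a.toNat.choose b.toNat : ℤ) else 0

/-- $Q_{k,h,n}(q)\in\mathbb{Z}[q]$: the sum over all generalized Dyck paths from (0,0)
to (n,h) of $q^{st_k(p)}$, where $st_k(p)$ is the number of k-down steps of p. -/
noncomputable def Q (k h n : ℕ) : Polynomial ℤ :=
  ∑ p ∈ gdPaths n (h : ℤ), (Polynomial.X : Polynomial ℤ) ^ downSteps (k : ℤ) p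

/-- $P_{k,n}(q) = Q_{k,0,n}(q)$. -/
noncomputable def P (k n : ℕ) : Polynomial ℤ := Q k 0 n

/-! A path from height `s > f` either never comes down to height `f`, or splits at its first
visit to `f` into a path from `s` to `f + 1` staying at height at least `f + 1`, a down-step from
`f + 1` (a `k`-down step only if `k = f + 1`), and an arbitrary path from `f`. With `Q`
generalised to an arbitrary start `s` and floor `f` (`pathPoly`, given by the first-step
recursion), this split is an identity proved by induction on the length. For `f = 0` and
`s = 1`, i.e. after the forced initial up-step, translating the paths that stay at height at
least `1` down by one (which turns `k`-down steps into `(k - 1)`-down steps) produces the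
`Q_{k-1,h-1}` and `P_{k-1}` terms. -/

open Polynomial

/-- The sum of `X ^ (number of k-down steps)` over the paths of length `n` from height `s` to
height `h` that never go below height `f`, computed by the first-step recursion. -/
noncomputable def pathPoly (k f : ℤ) : ℤ → ℤ → ℕ → ℤ[X]
  | s, h, 0 => if f ≤ s ∧ s = h then 1 else 0
  | s, h, n + 1 =>
    if f ≤ s then pathPoly k f (s + 1) h n + (if s = k then X else 1) * pathPoly k f (s - 1) h n
    else 0

section pathPoly

variable (k f h : ℤ) (n : ℕ)

lemma pathPoly_of_lt {s : ℤ} (hs : s < f) : pathPoly k f s h n = 0 := by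
  cases n <;> simp [pathPoly, not_le.mpr hs]

lemma pathPoly_succ_of_le {s : ℤ} (hs : f ≤ s) :
    pathPoly k f s h (n + 1) =
      pathPoly k f (s + 1) h n + (if s = k then X else 1) * pathPoly k f (s - 1) h n := by
  simp [pathPoly, hs]

lemma pathPoly_sub (c s : ℤ) :
    pathPoly (k - c) (f - c) (s - c) (h - c) n = pathPoly k f s h n := by
  induction n generalizing s with
  | zero => simp [pathPoly]
  | succ n ih =>
    simp only [pathPoly, sub_le_sub_iff_right, sub_left_inj]
    rw [← ih (s + 1), ← ih (s - 1)]
    ring_nf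

lemma pathPoly_first_visit {s : ℤ} (hs : f < s) :
    pathPoly k f s h n = pathPoly k (f + 1) s h n +
      ∑ a ∈ range n, pathPoly k (f + 1) s (f + 1) a * (if f + 1 = k then X else 1) *
        pathPoly k f f h (n - 1 - a) := by
  induction n generalizing s with
  | zero => simp [pathPoly, hs.le, Int.add_one_le_iff.mpr hs]
  | succ n ih =>
    have hidx : ∀ a, n + 1 - 1 - (a + 1) = n - 1 - a := by omega
    rw [pathPoly_succ_of_le _ _ _ _ hs.le, pathPoly_succ_of_le _ _ _ _ hs, sum_range_succ',
      ih (by omega)]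
    simp only [pathPoly_succ_of_le _ _ _ _ hs, hidx]
    rcases (Int.add_one_le_iff.mpr hs).eq_or_lt with rfl | hs'
    · have hfloor : ∀ h' m, pathPoly k (f + 1) f h' m = 0 := fun _ _ =>
        pathPoly_of_lt _ _ _ _ (by omega)
      have hstart : pathPoly k (f + 1) (f + 1) (f + 1) 0 = 1 := by simp [pathPoly]
      simp only [add_sub_cancel_right, hfloor, hstart, mul_zero, add_zero, Nat.sub_zero,
        Nat.add_sub_cancel]
      ring
    · have hstart : pathPoly k (f + 1) s (f + 1) 0 = 0 := by simp [pathPoly, hs'.ne']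
      rw [ih (s := s - 1) (by omega), hstart]
      simp only [mul_add, add_mul, sum_add_distrib, mul_sum, mul_assoc, zero_mul, add_zero]
      ring

end pathPoly

lemma pathHeight_zero {n : ℕ} (p : Fin n → Bool) : pathHeight p 0 = 0 := by
  simp [pathHeight]

lemma pathHeight_cons_succ {n : ℕ} (b : Bool) (p : Fin n → Bool) (i : ℕ) :
    pathHeight (Fin.cons b p : Fin (n + 1) → Bool) (i + 1) =
      (if b then 1 else -1) + pathHeight p i := by
  simp only [pathHeight, Finset.sum_filter, Fin.sum_univ_succ]
  simp

noncomputable def pathWeight (k f s h : ℤ) {n : ℕ} (p : Fin n → Bool) : ℤ[X] :=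
  if s + pathHeight p n = h ∧ ∀ i ≤ n, f ≤ s + pathHeight p i then
    X ^ (univ.filter fun i : Fin n => p i = false ∧ s + pathHeight p i = k).card
  else 0

lemma pathWeight_cons (k f s h : ℤ) {n : ℕ} (b : Bool) (p : Fin n → Bool) :
    pathWeight k f s h (Fin.cons b p : Fin (n + 1) → Bool) =
      if f ≤ s then
        (if b = false ∧ s = k then X else 1) * pathWeight k f (s + if b then 1 else -1) h p
      else 0 := by
  have hcard : (univ.filter fun i : Fin (n + 1) =>
        (Fin.cons b p : Fin (n + 1) → Bool) i = false ∧
          s + pathHeight (Fin.cons b p : Fin (n + 1) → Bool) i = k).card =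
      (if b = false ∧ s = k then 1 else 0) +
        (univ.filter fun i : Fin n =>
          p i = false ∧ (s + if b then 1 else -1) + pathHeight p i = k).card := by
    simp only [card_filter, Fin.sum_univ_succ, Fin.cons_zero, Fin.cons_succ, Fin.val_zero,
      Fin.val_succ, pathHeight_zero, pathHeight_cons_succ, add_zero, add_assoc]
  have hfloor : (∀ i ≤ n + 1, f ≤ s + pathHeight (Fin.cons b p : Fin (n + 1) → Bool) i) ↔
      f ≤ s ∧ ∀ i ≤ n, f ≤ (s + if b then 1 else -1) + pathHeight p i := by
    simp only [← Nat.lt_succ_iff, Nat.forall_lt_succ_left, pathHeight_zero, add_zero,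
      pathHeight_cons_succ, add_assoc]
  unfold pathWeight
  simp only [hcard, pow_add, hfloor, pathHeight_cons_succ, ← add_assoc]
  by_cases hs : f ≤ s
  · simp only [hs, true_and, if_true]
    split_ifs <;> simp
  · simp [hs]

lemma sum_pathWeight (k f s h : ℤ) (n : ℕ) :
    ∑ p : Fin n → Bool, pathWeight k f s h p = pathPoly k f s h n := by
  induction n generalizing s with
  | zero => simp [pathWeight, pathPoly, pathHeight_zero, and_comm]
  | succ n ih =>
    have hcons : ∑ p : Fin (n + 1) → Bool, pathWeight k f s h p =
        ∑ b, ∑ p : Fin n → Bool, pathWeight k f s h (Fin.cons b p : Fin (n + 1) → Bool) := by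
      rw [← (Fin.consEquiv fun _ => Bool).sum_comp, Fintype.sum_prod_type]
      rfl
    rw [hcons]
    by_cases hs : f ≤ s <;> simp [pathWeight_cons, hs, pathPoly, ← mul_sum, ih, sub_eq_add_neg]

lemma Q_eq_pathPoly (k h n : ℕ) : Q k h n = pathPoly k 0 0 h n := by
  rw [← sum_pathWeight, Q, gdPaths, sum_filter]
  refine sum_congr rfl fun p _ => ?_
  unfold pathWeight IsGDPath downSteps
  simp only [zero_add]
  congr

lemma sum_filter_add_add_two_eq_sum_range {M : Type*} [AddCommMonoid M] (n : ℕ)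
    (g : ℕ × ℕ → M) :
    ∑ ab ∈ (range (n + 1) ×ˢ range (n + 1)).filter (fun ab => ab.1 + ab.2 + 2 = n + 1), g ab =
      ∑ a ∈ range n, g (a, n - 1 - a) := by
  symm
  refine sum_nbij' (fun a => (a, n - 1 - a)) Prod.fst ?_ ?_ (fun _ _ => rfl) ?_ fun _ _ => rfl
  · intro a ha
    simp only [mem_range] at ha
    simp only [mem_filter, mem_product, mem_range]
    omega
  · intro ab hab
    simp only [mem_filter, mem_product, mem_range] at hab
    simp only [mem_range]
    omega
  · intro ab hab
    simp only [mem_filter, mem_product, mem_range] at hab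
    ext
    · rfl
    · simp only
      omega

/-- For k ≥ 2, h ≥ 1, n ≥ 1,
Q_{k,h,n}(q) = Q_{k−1,h−1,n−1}(q) + Σ_{a+b=n−2, a,b≥0} P_{k−1,a}(q)·Q_{k,h,b}(q). -/
theorem stmt11 (k h n : ℕ) (hk : 2 ≤ k) (hh : 1 ≤ h) (hn : 1 ≤ n) :
    Q k h n =
      Q (k - 1) (h - 1) (n - 1) +
        ∑ ab ∈ (Finset.range n ×ˢ Finset.range n).filter (fun ab => ab.1 + ab.2 + 2 = n),
          P (k - 1) ab.1 * Q k h ab.2 := by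
  obtain ⟨m, rfl⟩ := Nat.exists_eq_add_of_le' hn
  have hstart : Q k h (m + 1) = pathPoly k 0 1 h m := by
    rw [Q_eq_pathPoly, pathPoly_succ_of_le _ _ _ _ le_rfl,
      pathPoly_of_lt _ _ _ _ (by norm_num : (0 : ℤ) - 1 < 0)]
    simp
  have hshift (h' : ℤ) (a : ℕ) :
      pathPoly ((k - 1 : ℕ) : ℤ) 0 0 (h' - 1) a = pathPoly k 1 1 h' a := by
    rw [← pathPoly_sub k 1 h' a 1 1, Nat.cast_sub (by omega : 1 ≤ k)]
    simp
  have hshift₀ (a : ℕ) : P (k - 1) a = pathPoly k 1 1 1 a := by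
    simpa [P, Q_eq_pathPoly] using hshift 1 a
  have hk1 : (1 : ℤ) ≠ k := by omega
  rw [hstart, pathPoly_first_visit k 0 h m one_pos, Nat.add_sub_cancel,
    sum_filter_add_add_two_eq_sum_range, Q_eq_pathPoly, Nat.cast_sub hh, Nat.cast_one, hshift]
  simp only [zero_add, if_neg hk1, mul_one, hshift₀, Q_eq_pathPoly]
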